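/- arXiv:2112.07960 — 2 statements merged into one kernel-verified Lean document; each statement's English description precedes it below -/
import Mathlib

section
/- Assume A(i) and D. Let μ^k = μ̂^k φ_i^k ∈ M_i for k ∈ ℕ ∪ {0}, meaning μ^k({x} × B) = φ_i^k(B|x) μ̂^k(x) with μ̂^k(x) = μ^k({x} × A_i(x)) and φ_i^k ∈ Φ_i. If μ^k → μ^0 weakly in M_i as k → ∞, then for each x ∈ X, μ̂^k(x) → μ̂^0(x) and φ_i^k(·|x) → φ_i^0(·|x) weakly in Pr(A_i(x)). -/
open MeasureTheory ProbabilityTheory Filter Topology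
open scoped ENNReal NNReal

namespace CSGame

/-- The joint action space of the players. -/
abbrev JA {n : ℕ} (A : Fin n → Type) : Type := (i : Fin n) → A i

/-- The data of a constrained discounted stochastic Markov game:
countable state space `X`, Borel action spaces `A i` with compact admissible
action sets `As i x`, transition probability `p`, initial distribution `η`,
discount factor `α`, cost/constraint functions `c i ℓ` (`ℓ = 0` is the cost,
`ℓ ∈ L = {1,…,l}` are the constraints) and constraint bounds `κ i ℓ`. -/
structure GameData (n l : ℕ) (X : Type) (A : Fin n → Type)
    [MeasurableSpace X] [∀ i, MeasurableSpace (A i)] [∀ i, TopologicalSpace (A i)] where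
  As : (i : Fin n) → X → Set (A i)
  p : X → JA A → Measure X
  η : Measure X
  α : ℝ
  c : Fin n → Fin (l + 1) → X → JA A → ℝ
  κ : Fin n → Fin (l + 1) → ℝ
  hAs_ne : ∀ i x, (As i x).Nonempty
  hAs_cpt : ∀ i x, IsCompact (As i x)
  hp : ∀ x a, IsProbabilityMeasure (p x a)
  hpm : ∀ x y, Measurable fun a => p x a {y}
  hη : IsProbabilityMeasure η
  hα0 : 0 < α
  hα1 : α < 1
  hc : ∀ i ℓ x, Measurable (c i ℓ x)

variable {n l : ℕ}
variable {X : Type} [Countable X] [MeasurableSpace X] [DiscreteMeasurableSpace X]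
  [TopologicalSpace X] [DiscreteTopology X] [BorelSpace X] [SecondCountableTopology X]
variable {A : Fin n → Type} [∀ i, MeasurableSpace (A i)] [∀ i, TopologicalSpace (A i)]
  [∀ i, PolishSpace (A i)] [∀ i, BorelSpace (A i)]

/-- The set of feasible action profiles in state `x` (the section of `𝕂` at `x`). -/
def jointSet (G : GameData n l X A) (x : X) : Set (JA A) :=
  Set.univ.pi fun i => G.As i x

/-- Histories of the game: `Hist X AA t` records the initial state and `t`
state-action transitions, ending with the current state (this is `H^{t+1}`). -/
def Hist (X AA : Type) : ℕ → Type
  | 0 => X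
  | t + 1 => Hist X AA t × AA × X

noncomputable instance histMS (X AA : Type) [MeasurableSpace X] [MeasurableSpace AA] :
    ∀ t, MeasurableSpace (Hist X AA t)
  | 0 => inferInstanceAs (MeasurableSpace X)
  | t + 1 =>
      letI := histMS X AA t
      inferInstanceAs (MeasurableSpace (Hist X AA t × AA × X))

/-- The current (last) state of a history. -/
def lastState (X AA : Type) : ∀ t, Hist X AA t → X
  | 0, h => h
  | _ + 1, h => h.2.2

theorem measurable_lastState (X AA : Type) [MeasurableSpace X] [MeasurableSpace AA] :
    ∀ t, Measurable (lastState X AA t)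
  | 0 => measurable_id
  | _ + 1 => measurable_snd.comp measurable_snd

variable (G : GameData n l X A)

/-- A (history dependent, randomised) strategy of player `i`: a sequence of
transition probabilities from histories to the action space of player `i`,
concentrated on the admissible action set at the current state. -/
structure Strategy (i : Fin n) where
  f : ∀ t, Hist X (JA A) t → ProbabilityMeasure (A i)
  meas : ∀ t (s : Set (A i)), MeasurableSet s →
    Measurable fun h => (f t h : Measure (A i)) s
  supp : ∀ t h, f t h (G.As i (lastState X (JA A) t h)) = 1

/-- A stationary strategy of player `i`: a transition probability from states to
actions, concentrated on the admissible action set. -/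
def Stat (i : Fin n) : Type :=
  {φ : X → ProbabilityMeasure (A i) // ∀ x, φ x (G.As i x) = 1}

noncomputable instance (i : Fin n) : TopologicalSpace (Stat G i) :=
  inferInstanceAs (TopologicalSpace
    {φ : X → ProbabilityMeasure (A i) // ∀ x, φ x (G.As i x) = 1})

/-- Multi-strategies: one strategy for each player. -/
abbrev MultiStrategy : Type _ := ∀ i, Strategy G i

/-- Stationary multi-strategies (the set `Φ`). -/
abbrev StatProfile : Type _ := ∀ i, Stat G i

noncomputable instance : TopologicalSpace (StatProfile G) :=
  inferInstanceAs (TopologicalSpace (∀ i, Stat G i))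

/-- The strategy induced by a stationary strategy. -/
noncomputable def ofStat (i : Fin n) (φ : Stat G i) : Strategy G i where
  f := fun t h => φ.1 (lastState X (JA A) t h)
  meas := fun t _s _hs =>
    (Measurable.of_discrete (f := fun x => (φ.1 x : Measure (A i)) _s)).comp
      (measurable_lastState X (JA A) t)
  supp := fun t h => φ.2 _

/-- The multi-strategy induced by a stationary multi-strategy. -/
noncomputable def ofStatAll (φ : StatProfile G) : MultiStrategy G :=
  fun i => ofStat G i (φ i)

/-- `[π_{-i}, σ]` : player `i` deviates to `σ`, the others keep `π`. -/
noncomputable def combine (π : MultiStrategy G) (i : Fin n) (σ : Strategy G i) :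
    MultiStrategy G :=
  Function.update π i σ

/-- `[φ_{-i}, γ]` for stationary profiles. -/
noncomputable def updStat (φ : StatProfile G) (i : Fin n) (γ : Stat G i) :
    StatProfile G :=
  Function.update φ i γ

/-- The joint (product) distribution of the players' actions after history `h`. -/
noncomputable def jointLaw (π : MultiStrategy G) (t : ℕ) (h : Hist X (JA A) t) :
    Measure (JA A) :=
  Measure.pi fun i => ((π i).f t h : Measure (A i))

/-- The distribution of histories of length `t` under the multi-strategy `π`,
the transition probability `G.p` and the initial distribution `η'`
(the finite-dimensional marginals of the Ionescu–Tulcea measure `P^π_{η'}`). -/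
noncomputable def histMeas (η' : Measure X) (π : MultiStrategy G) :
    ∀ t, Measure (Hist X (JA A) t)
  | 0 => η'
  | t + 1 =>
      (histMeas η' π t).bind fun h =>
        (jointLaw G π t h).bind fun a =>
          (G.p (lastState X (JA A) t h) a).map fun y =>
            (show Hist X (JA A) (t + 1) from (h, a, y))

/-- Expected value of `f (x^{t+1}, a^{t+1})` under `π` (states enumerated from `1`
in the paper, from `0` here). -/
noncomputable def stageExp (η' : Measure X) (π : MultiStrategy G) (t : ℕ)
    (f : X → JA A → ℝ) : ℝ :=
  ∫ h, (∫ a, f (lastState X (JA A) t h) a ∂(jointLaw G π t h)) ∂(histMeas G η' π t)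

/-- The expected discounted cost functional
`J(π) = (1-α) E^π_{η'} [∑_{t≥1} α^{t-1} f(x^t,a^t)]`. -/
noncomputable def Jfun (η' : Measure X) (f : X → JA A → ℝ) (π : MultiStrategy G) : ℝ :=
  (1 - G.α) * ∑' t : ℕ, G.α ^ t * stageExp G η' π t f

/-- `J_i^ℓ(π)` of the paper. -/
noncomputable def J (i : Fin n) (ℓ : Fin (l + 1)) (π : MultiStrategy G) : ℝ :=
  Jfun G G.η (G.c i ℓ) π

/-- `π_i ∈ Δ_i(π_{-i})` : all constraints of player `i` are satisfied. -/
def Feas (i : Fin n) (π : MultiStrategy G) : Prop :=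
  ∀ ℓ : Fin (l + 1), ℓ ≠ 0 → J G i ℓ π ≤ G.κ i ℓ

/-- Expectation of `w(x^{t+1})` (as an extended nonnegative real). -/
noncomputable def wStateExp (η' : Measure X) (π : MultiStrategy G) (t : ℕ)
    (w : X → ℝ) : ℝ≥0∞ :=
  ∫⁻ h, ENNReal.ofReal (w (lastState X (JA A) t h)) ∂(histMeas G η' π t)

/-- Assumption A(i): continuity of the transition probability in the actions. -/
def AssumptionA1 : Prop :=
  ∀ x y, ContinuousOn (fun a => G.p x a {y}) (jointSet G x)

/-- Assumption A: continuity of the transition probability and of the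
cost/constraint functions in the actions. -/
def AssumptionA : Prop :=
  AssumptionA1 G ∧ ∀ i ℓ x, ContinuousOn (G.c i ℓ x) (jointSet G x)

/-- Assumption B for the weight function `w`: `w ≥ 1` bounds all the costs on `𝕂`,
the discounted tails `sup_π (1-α) E^π_η[∑_{t≥k} α^{t-1} w(x^t)]` vanish as `k → ∞`,
and for each stage `t` the family `{w(x^t)}` is uniformly integrable over all
multi-strategies. -/
def AssumptionB (w : X → ℝ) : Prop :=
  (∀ x, 1 ≤ w x) ∧
  (∀ i ℓ x a, a ∈ jointSet G x → |G.c i ℓ x a| ≤ w x) ∧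
  Tendsto (fun k : ℕ => ⨆ π : MultiStrategy G,
      ENNReal.ofReal (1 - G.α) *
        ∑' t : ℕ, ENNReal.ofReal G.α ^ (k + t) * wStateExp G G.η π (k + t) w)
    atTop (𝓝 0) ∧
  ∀ t : ℕ, Tendsto (fun k : ℕ => ⨆ π : MultiStrategy G,
      ∫⁻ h in {h | (k : ℝ) ≤ w (lastState X (JA A) t h)},
        ENNReal.ofReal (w (lastState X (JA A) t h)) ∂(histMeas G G.η π t))
    atTop (𝓝 0)

/-- Assumption C (Slater condition). -/
def AssumptionC : Prop :=
  ∀ (φ : StatProfile G) (i : Fin n), ∃ π : Strategy G i,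
    ∀ ℓ : Fin (l + 1), ℓ ≠ 0 → J G i ℓ (combine G (ofStatAll G φ) i π) < G.κ i ℓ

/-- Assumption D: the initial distribution charges every state. -/
def AssumptionD : Prop :=
  ∀ x : X, 0 < G.η {x}

/-- Assumption W (weighted-norm conditions of Wessels). -/
def AssumptionW (w : X → ℝ) : Prop :=
  (∀ x, 1 ≤ w x) ∧
  (∀ i ℓ x a, a ∈ jointSet G x → |G.c i ℓ x a| ≤ w x) ∧
  (∃ δ : ℝ, 1 ≤ δ ∧ δ * G.α < 1 ∧ ∀ x a, a ∈ jointSet G x →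
      ∫⁻ y, ENNReal.ofReal (w y) ∂(G.p x a) ≤ ENNReal.ofReal (δ * w x)) ∧
  (∀ x, ContinuousOn (fun a => ∫⁻ y, ENNReal.ofReal (w y) ∂(G.p x a)) (jointSet G x)) ∧
  (∫⁻ y, ENNReal.ofReal (w y) ∂G.η) < ⊤

/-- All cost and constraint functions are bounded. -/
def BoundedCosts : Prop :=
  ∀ i (ℓ : Fin (l + 1)), ∃ C : ℝ, ∀ x a, |G.c i ℓ x a| ≤ C

/-- A stationary multi-strategy `φ` is a Nash equilibrium of the constrained game:
it is feasible, and no player can lower his discounted cost by a unilateral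
deviation to any (history dependent) strategy satisfying his constraints. -/
def IsNashStat (φ : StatProfile G) : Prop :=
  (∀ i, Feas G i (ofStatAll G φ)) ∧
  ∀ (i : Fin n) (σ : Strategy G i), Feas G i (combine G (ofStatAll G φ) i σ) →
    J G i 0 (ofStatAll G φ) ≤ J G i 0 (combine G (ofStatAll G φ) i σ)

section Occupation

/-- A correlated strategy of the players. -/
structure CorrStrategy where
  f : ∀ t, Hist X (JA A) t → ProbabilityMeasure (JA A)
  meas : ∀ t (s : Set (JA A)), MeasurableSet s →
    Measurable fun h => (f t h : Measure (JA A)) s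
  supp : ∀ t h, f t h (jointSet G (lastState X (JA A) t h)) = 1

/-- History distributions under a correlated strategy. -/
noncomputable def histMeasC (π : CorrStrategy G) : ∀ t, Measure (Hist X (JA A) t)
  | 0 => G.η
  | t + 1 =>
      (histMeasC π t).bind fun h =>
        ((π.f t h : Measure (JA A))).bind fun a =>
          (G.p (lastState X (JA A) t h) a).map fun y =>
            (show Hist X (JA A) (t + 1) from (h, a, y))

/-- The occupation measure `ρ(K') = (1-α) E^π_η [∑_{t≥1} α^{t-1} 1_{K'}(x^t,a^t)]`
of a correlated strategy, as a measure on the state–action pairs. -/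
noncomputable def occ (π : CorrStrategy G) : Measure (X × JA A) :=
  ENNReal.ofReal (1 - G.α) •
    Measure.sum fun t : ℕ => ENNReal.ofReal G.α ^ t •
      ((histMeasC G π t).bind fun h =>
        (π.f t h : Measure (JA A)).map fun a => (lastState X (JA A) t h, a))

/-- The set `𝓜` of occupation measures of correlated strategies. -/
def OccSet : Set (ProbabilityMeasure (X × JA A)) :=
  {ρ | ∃ π : CorrStrategy G, (ρ : Measure (X × JA A)) = occ G π}

/-- Projection of a state–action pair onto the coordinates of player `i`. -/
def projAct (i : Fin n) : X × JA A → X × A i := fun q => (q.1, q.2 i)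

/-- The set `𝓜_i` of statewise projections of occupation measures onto `𝕂_i`. -/
def MiSet (i : Fin n) : Set (ProbabilityMeasure (X × A i)) :=
  {μ | ∃ ρ ∈ OccSet G, (μ : Measure (X × A i)) = (ρ : Measure (X × JA A)).map (projAct i)}

/-- The marginal `μ̂(x) = μ({x} × A_i(x))`. -/
noncomputable def marg (i : Fin n) (μ : ProbabilityMeasure (X × A i)) (x : X) : ℝ≥0∞ :=
  (μ : Measure (X × A i)) ({x} ×ˢ G.As i x)

/-- `μ = μ̂ φ` : `φ` disintegrates `μ`, i.e. `μ({x} × B) = φ(B|x) μ̂(x)`. -/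
def Disint (i : Fin n) (μ : ProbabilityMeasure (X × A i)) (φ : Stat G i) : Prop :=
  ∀ x (B : Set (A i)), MeasurableSet B → B ⊆ G.As i x →
    (μ : Measure (X × A i)) ({x} ×ˢ B) = (φ.1 x B : ℝ≥0∞) * marg G i μ x

/-- The occupation measure on state–action pairs of a multi-strategy. -/
noncomputable def occMulti (η' : Measure X) (π : MultiStrategy G) : Measure (X × JA A) :=
  ENNReal.ofReal (1 - G.α) •
    Measure.sum fun t : ℕ => ENNReal.ofReal G.α ^ t •
      ((histMeas G η' π t).bind fun h =>
        (jointLaw G π t h).map fun a => (lastState X (JA A) t h, a))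

end Occupation

section COP

/-- The product distribution on action profiles in state `x` in which player `i`
plays the fixed action `ai` and every player `j ≠ i` plays `φ j`. -/
noncomputable def statJoint (φ : StatProfile G) (i : Fin n) (x : X) (ai : A i) :
    Measure (JA A) :=
  Measure.pi fun j =>
    if h : j = i then Measure.dirac (cast (congrArg A h.symm) ai)
    else ((φ j).1 x : Measure (A j))

/-- `c_i^ℓ(x, [φ_{-i}(x), a_i])`. -/
noncomputable def cbar (φ : StatProfile G) (i : Fin n) (ℓ : Fin (l + 1)) (x : X)
    (ai : A i) : ℝ :=
  ∫ a, G.c i ℓ x a ∂(statJoint G φ i x ai)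

/-- `p(y | x, [φ_{-i}(x), a_i])`. -/
noncomputable def pbar (φ : StatProfile G) (i : Fin n) (y x : X) (ai : A i) : ℝ≥0∞ :=
  ∫⁻ a, G.p x a {y} ∂(statJoint G φ i x ai)

/-- Feasibility in the constrained optimisation problem `COP(φ_{-i})`:
`μ ∈ Pr(𝕂_i)` satisfies the constraint inequalities and the characteristic
equations of occupation measures. -/
def COPFeasible (φ : StatProfile G) (i : Fin n)
    (μ : ProbabilityMeasure (X × A i)) : Prop :=
  (μ : Measure (X × A i)) {q : X × A i | q.2 ∈ G.As i q.1} = 1 ∧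
  (∀ ℓ : Fin (l + 1), ℓ ≠ 0 →
    ∫ q : X × A i, cbar G φ i ℓ q.1 q.2 ∂(μ : Measure (X × A i)) ≤ G.κ i ℓ) ∧
  ∀ x : X, (μ : Measure (X × A i)) ({x} ×ˢ G.As i x) =
    ENNReal.ofReal (1 - G.α) * G.η {x} +
      ENNReal.ofReal G.α *
        ∫⁻ q : X × A i, pbar G φ i x q.1 q.2 ∂(μ : Measure (X × A i))

/-- The objective of `COP(φ_{-i})`. -/
noncomputable def COPObj (φ : StatProfile G) (i : Fin n)
    (μ : ProbabilityMeasure (X × A i)) : ℝ :=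
  ∫ q : X × A i, cbar G φ i 0 q.1 q.2 ∂(μ : Measure (X × A i))

/-- The solution set `𝓞_i(φ_{-i})` of `COP(φ_{-i})`. -/
def COPSol (φ : StatProfile G) (i : Fin n) : Set (ProbabilityMeasure (X × A i)) :=
  {μ | COPFeasible G φ i μ ∧
    ∀ ν, COPFeasible G φ i ν → COPObj G φ i μ ≤ COPObj G φ i ν}

end COP

section Perturbed

/-- `η̃` is a probability measure charging exactly the `η`-null states `X_0`. -/
def IsPerturb (ηt : Measure X) : Prop :=
  IsProbabilityMeasure ηt ∧ (∀ x, G.η {x} = 0 → 0 < ηt {x}) ∧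
    ∀ x, G.η {x} ≠ 0 → ηt {x} = 0

/-- The perturbed initial distribution `η(m) = (1 - 1/m) η + (1/m) η̃`. -/
noncomputable def etam (ηt : Measure X) (m : ℕ) : Measure X :=
  ENNReal.ofReal (1 - 1 / (m : ℝ)) • G.η + ENNReal.ofReal (1 / (m : ℝ)) • ηt

/-- The truncation `c_i^{ℓ,m}` of `c_i^ℓ` at the level `√m`. -/
noncomputable def ctrunc (i : Fin n) (ℓ : Fin (l + 1)) (m : ℕ) (x : X) (a : JA A) : ℝ :=
  max (-Real.sqrt m) (min (G.c i ℓ x a) (Real.sqrt m))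

/-- `J_i^{ℓ,η(m)}`: discounted cost with truncated costs and perturbed initial
distribution. -/
noncomputable def Jm (ηt : Measure X) (m : ℕ) (i : Fin n) (ℓ : Fin (l + 1))
    (π : MultiStrategy G) : ℝ :=
  Jfun G (etam G ηt m) (ctrunc G i ℓ m) π

/-- The perturbed constraint bounds `κ_i^{ℓ,m} = (1 - 1/m) κ_i^ℓ + 1/√m`. -/
noncomputable def kappam (i : Fin n) (ℓ : Fin (l + 1)) (m : ℕ) : ℝ :=
  (1 - 1 / (m : ℝ)) * G.κ i ℓ + 1 / Real.sqrt m

/-- `π_i ∈ Δ_i^m(π_{-i})` : the constraints of the `m`-CSG hold. -/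
def FeasM (ηt : Measure X) (m : ℕ) (i : Fin n) (π : MultiStrategy G) : Prop :=
  ∀ ℓ : Fin (l + 1), ℓ ≠ 0 → Jm G ηt m i ℓ π ≤ kappam G i ℓ m

end Perturbed

end CSGame

/-!
Since `X` is discrete, `{x} × A_i` is clopen, so the section `B ↦ μ({x} × B)` depends
weakly continuously on `μ`. As `μ^k` lives on `𝕂_i`, its section at `x` is
`μ̂^k(x) φ_i^k(·|x)`: its mass is `μ̂^k(x)` and its normalization is `φ_i^k(·|x)`.
Mass and normalization are continuous at a nonzero limit, and `μ̂^0(x) ≥ (1-α) η(x) > 0`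
because the first stage of every occupation measure contributes `(1-α) η`.
-/

namespace MeasureTheory.FiniteMeasure

section Normalize

variable {Ω : Type*} [MeasurableSpace Ω]

theorem mass_smul_toFiniteMeasure (ν : ProbabilityMeasure Ω) (c : ℝ≥0) :
    (c • ν.toFiniteMeasure).mass = c := by
  simp [mass, smul_apply]

theorem normalize_smul_toFiniteMeasure [Nonempty Ω] (ν : ProbabilityMeasure Ω) {c : ℝ≥0}
    (hc : c ≠ 0) : (c • ν.toFiniteMeasure).normalize = ν := by
  have h0 : c • ν.toFiniteMeasure ≠ 0 := by
    rw [← mass_nonzero_iff, mass_smul_toFiniteMeasure]; exact hc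
  refine ProbabilityMeasure.eq_of_forall_apply_eq _ _ fun s _ ↦ ?_
  rw [normalize_eq_of_nonzero _ h0, mass_smul_toFiniteMeasure, smul_apply]
  simp [hc]

end Normalize

section Topology

variable {Ω : Type*} [MeasurableSpace Ω] [TopologicalSpace Ω] [OpensMeasurableSpace Ω]
  {γ : Type*} {F : Filter γ}

theorem tendsto_of_tendsto_smul_toFiniteMeasure [Nonempty Ω] {cs : γ → ℝ≥0} {c : ℝ≥0}
    {νs : γ → ProbabilityMeasure Ω} {ν : ProbabilityMeasure Ω} (hcs : ∀ k, cs k ≠ 0)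
    (hc : c ≠ 0)
    (h : Tendsto (fun k ↦ cs k • (νs k).toFiniteMeasure) F (𝓝 (c • ν.toFiniteMeasure))) :
    Tendsto cs F (𝓝 c) ∧ Tendsto νs F (𝓝 ν) := by
  have hne : c • ν.toFiniteMeasure ≠ 0 := by
    rw [← mass_nonzero_iff, mass_smul_toFiniteMeasure]; exact hc
  constructor
  · simpa only [mass_smul_toFiniteMeasure] using h.mass
  · simpa only [normalize_smul_toFiniteMeasure _ (hcs _), normalize_smul_toFiniteMeasure _ hc]
      using tendsto_normalize_of_tendsto h hne

open _root_.BoundedContinuousFunction in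
theorem tendsto_restrict_of_isClopen {μs : γ → FiniteMeasure Ω} {μ : FiniteMeasure Ω}
    (h : Tendsto μs F (𝓝 μ)) {s : Set Ω} (hs : IsClopen s) :
    Tendsto (fun k ↦ (μs k).restrict s) F (𝓝 (μ.restrict s)) := by
  have hint : ∀ (ν : FiniteMeasure Ω) (f : Ω →ᵇ ℝ),
      ∫ x, f x ∂(ν.restrict s : Measure Ω) =
        ∫ x, (indicator s hs * f) x ∂(ν : Measure Ω) := by
    intro ν f
    rw [restrict_measure_eq, ← integral_indicator hs.isClosed.measurableSet]
    congr 1 with x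
    by_cases hx : x ∈ s <;> simp [hx]
  refine tendsto_iff_forall_integral_tendsto.2 fun f ↦ ?_
  simp only [hint]
  exact tendsto_iff_forall_integral_tendsto.1 h _

end Topology

section Section

variable {α β : Type*} [MeasurableSpace α] [MeasurableSpace β]

noncomputable def sectionAt (μ : FiniteMeasure (α × β)) (a : α) : FiniteMeasure β :=
  (μ.restrict ({a} ×ˢ Set.univ)).map Prod.snd

theorem toMeasure_sectionAt_apply [MeasurableSingletonClass α] (μ : FiniteMeasure (α × β))
    (a : α) {B : Set β} (hB : MeasurableSet B) :
    (μ.sectionAt a : Measure β) B = (μ : Measure (α × β)) ({a} ×ˢ B) := by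
  rw [sectionAt, toMeasure_map, Measure.map_apply measurable_snd hB, restrict_measure_eq,
    Measure.restrict_apply (measurable_snd hB), ← Set.univ_prod, Set.prod_inter_prod,
    Set.univ_inter, Set.inter_univ]

theorem tendsto_sectionAt [TopologicalSpace α] [DiscreteTopology α] [TopologicalSpace β]
    [BorelSpace β] [OpensMeasurableSpace (α × β)]
    {γ : Type*} {F : Filter γ} {μs : γ → FiniteMeasure (α × β)}
    {μ : FiniteMeasure (α × β)}
    (h : Tendsto μs F (𝓝 μ)) (a : α) :
    Tendsto (fun k ↦ (μs k).sectionAt a) F (𝓝 (μ.sectionAt a)) :=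
  tendsto_map_of_tendsto_of_continuous _ _
    (tendsto_restrict_of_isClopen h ((isClopen_discrete {a}).prod isClopen_univ)) continuous_snd

end Section

end MeasureTheory.FiniteMeasure

namespace CSGame

variable {n l : ℕ} {X : Type} [MeasurableSpace X] {A : Fin n → Type}
  [∀ i, MeasurableSpace (A i)]

theorem measurable_projAct (i : Fin n) : Measurable (projAct (X := X) (A := A) i) :=
  measurable_fst.prodMk ((measurable_pi_apply i).comp measurable_snd)

variable [∀ i, TopologicalSpace (A i)] {G : GameData n l X A}

theorem le_occ_fst_preimage [DiscreteMeasurableSpace X] (π : CorrStrategy G) (x : X) :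
    ENNReal.ofReal (1 - G.α) * G.η {x} ≤ occ G π (Prod.fst ⁻¹' {x}) := by
  have hF : MeasurableSet (Prod.fst ⁻¹' {x} : Set (X × JA A)) :=
    measurable_fst (measurableSet_singleton x)
  have hstage : (G.η.bind fun h : X ↦
      (π.f 0 h : Measure (JA A)).map fun a ↦ (h, a)) (Prod.fst ⁻¹' {x}) = G.η {x} := by
    rw [Measure.bind_apply hF Measurable.of_discrete.aemeasurable]
    have hinner : ∀ h : X,
        ((π.f 0 h : Measure (JA A)).map fun a ↦ (h, a)) (Prod.fst ⁻¹' {x}) =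
          ({x} : Set X).indicator 1 h := by
      intro h
      rw [Measure.map_apply measurable_prodMk_left hF]
      by_cases hx : h = x <;> simp [hx, Set.preimage_preimage]
    simp only [hinner, lintegral_indicator_one (measurableSet_singleton x)]
  rw [occ, Measure.smul_apply, Measure.sum_apply _ hF, smul_eq_mul, ← hstage]
  gcongr
  refine le_of_eq_of_le ?_ (ENNReal.le_tsum 0)
  rw [pow_zero, one_smul]
  rfl

section Marginals

variable {i : Fin n} {μ : ProbabilityMeasure (X × A i)}

theorem le_measure_singleton_prod_univ_of_mem_MiSet [DiscreteMeasurableSpace X]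
    (hμ : μ ∈ MiSet G i) (x : X) :
    ENNReal.ofReal (1 - G.α) * G.η {x} ≤ (μ : Measure (X × A i)) ({x} ×ˢ Set.univ) := by
  obtain ⟨ρ, ⟨π, hπ⟩, hmap⟩ := hμ
  rw [hmap, Measure.map_apply (measurable_projAct i)
    ((measurableSet_singleton x).prod .univ), hπ]
  exact (le_occ_fst_preimage π x).trans (measure_mono fun q hq ↦ ⟨hq, trivial⟩)

theorem measure_singleton_prod_inter_As
    (hμ : (μ : Measure (X × A i)) {q | q.2 ∉ G.As i q.1} = 0) (x : X) (B : Set (A i)) :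
    (μ : Measure (X × A i)) ({x} ×ˢ (B ∩ G.As i x)) =
      (μ : Measure (X × A i)) ({x} ×ˢ B) := by
  refine Eq.trans ?_ (measure_inter_conull (t := {q : X × A i | q.2 ∈ G.As i q.1}) hμ)
  congr 1
  ext ⟨y, a⟩
  simp only [Set.mem_prod, Set.mem_singleton_iff, Set.mem_inter_iff, Set.mem_ofPred_eq]
  constructor
  · rintro ⟨rfl, hB, hA⟩; exact ⟨⟨rfl, hB⟩, hA⟩
  · rintro ⟨⟨rfl, hB⟩, hA⟩; exact ⟨rfl, hB, hA⟩

theorem marg_eq_measure_singleton_prod_univ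
    (hμ : (μ : Measure (X × A i)) {q | q.2 ∉ G.As i q.1} = 0) (x : X) :
    marg G i μ x = (μ : Measure (X × A i)) ({x} ×ˢ Set.univ) := by
  rw [marg, ← Set.univ_inter (G.As i x), measure_singleton_prod_inter_As hμ]

end Marginals

variable [∀ i, T2Space (A i)] [∀ i, OpensMeasurableSpace (A i)]

theorem measurableSet_mem_As [Countable X] [MeasurableSingletonClass X] (i : Fin n) :
    MeasurableSet {q : X × A i | q.2 ∈ G.As i q.1} := by
  convert MeasurableSet.iUnion fun x : X ↦
    (measurableSet_singleton x).prod (G.hAs_cpt i x).isClosed.measurableSet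
  ext ⟨y, a⟩
  simp

theorem CorrStrategy.measure_compl_jointSet (π : CorrStrategy G) (t : ℕ) (h : Hist X (JA A) t) :
    (π.f t h : Measure (JA A)) (jointSet G (lastState X (JA A) t h))ᶜ = 0 := by
  refine (prob_compl_eq_zero_iff ?_).2 ?_
  · exact MeasurableSet.univ_pi fun j ↦ (G.hAs_cpt j _).isClosed.measurableSet
  · rw [← ProbabilityMeasure.ennreal_coeFn_eq_coeFn_toMeasure, π.supp t h, ENNReal.coe_one]

theorem Stat.measure_compl_As {i : Fin n} (φ : Stat G i) (x : X) :
    (φ.1 x : Measure (A i)) (G.As i x)ᶜ = 0 := by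
  refine (prob_compl_eq_zero_iff (G.hAs_cpt i x).isClosed.measurableSet).2 ?_
  rw [← ProbabilityMeasure.ennreal_coeFn_eq_coeFn_toMeasure, φ.2 x, ENNReal.coe_one]

theorem occ_notMem_As [Countable X] [MeasurableSingletonClass X] (π : CorrStrategy G)
    (i : Fin n) : occ G π {q : X × JA A | q.2 i ∉ G.As i q.1} = 0 := by
  have hS : MeasurableSet {q : X × JA A | q.2 i ∉ G.As i q.1} :=
    (measurableSet_mem_As i).compl.preimage (measurable_projAct i)
  have hstage : ∀ t, ((histMeasC G π t).bind fun h ↦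
      (π.f t h : Measure (JA A)).map fun a ↦ (lastState X (JA A) t h, a))
      {q : X × JA A | q.2 i ∉ G.As i q.1} = 0 := by
    intro t
    refine nonpos_iff_eq_zero.1 ((Measure.bind_apply_le _ hS).trans_eq ?_)
    have hzero : ∀ h : Hist X (JA A) t, ((π.f t h : Measure (JA A)).map
        fun a ↦ (lastState X (JA A) t h, a)) {q : X × JA A | q.2 i ∉ G.As i q.1} = 0 := by
      intro h
      rw [Measure.map_apply measurable_prodMk_left hS]
      refine measure_mono_null ?_ (π.measure_compl_jointSet t h)
      intro a ha hmem
      exact ha (hmem i (Set.mem_univ i))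
    simp [hzero]
  simp [occ, Measure.sum_apply _ hS, hstage]

section Marginals

variable {i : Fin n} {μ : ProbabilityMeasure (X × A i)}

theorem measure_notMem_As_of_mem_MiSet [Countable X] [MeasurableSingletonClass X]
    (hμ : μ ∈ MiSet G i) : (μ : Measure (X × A i)) {q | q.2 ∉ G.As i q.1} = 0 := by
  obtain ⟨ρ, ⟨π, hπ⟩, hmap⟩ := hμ
  have hS : MeasurableSet {q : X × A i | q.2 ∉ G.As i q.1} := (measurableSet_mem_As i).compl
  rw [hmap, Measure.map_apply (measurable_projAct i) hS, hπ]
  exact occ_notMem_As π i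

theorem marg_pos_of_mem_MiSet [Countable X] [DiscreteMeasurableSpace X] (hD : AssumptionD G)
    (hμ : μ ∈ MiSet G i) (x : X) : 0 < marg G i μ x :=
  calc 0 < ENNReal.ofReal (1 - G.α) * G.η {x} :=
        ENNReal.mul_pos (ENNReal.ofReal_pos.2 (sub_pos.2 G.hα1)).ne' (hD x).ne'
    _ ≤ (μ : Measure (X × A i)) ({x} ×ˢ Set.univ) :=
        le_measure_singleton_prod_univ_of_mem_MiSet hμ x
    _ = marg G i μ x :=
        (marg_eq_measure_singleton_prod_univ (measure_notMem_As_of_mem_MiSet hμ) x).symm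

theorem Disint.measure_singleton_prod {φ : Stat G i} (hd : Disint G i μ φ)
    (hμ : (μ : Measure (X × A i)) {q | q.2 ∉ G.As i q.1} = 0) (x : X) {B : Set (A i)}
    (hB : MeasurableSet B) :
    (μ : Measure (X × A i)) ({x} ×ˢ B) = (φ.1 x : Measure (A i)) B * marg G i μ x := by
  rw [← measure_singleton_prod_inter_As hμ,
    hd x _ (hB.inter (G.hAs_cpt i x).isClosed.measurableSet) Set.inter_subset_right,
    ProbabilityMeasure.ennreal_coeFn_eq_coeFn_toMeasure,
    measure_inter_conull (φ.measure_compl_As x)]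

theorem Disint.sectionAt_eq [MeasurableSingletonClass X] {φ : Stat G i} (hd : Disint G i μ φ)
    (hμ : (μ : Measure (X × A i)) {q | q.2 ∉ G.As i q.1} = 0) (x : X) :
    μ.toFiniteMeasure.sectionAt x = (marg G i μ x).toNNReal • (φ.1 x).toFiniteMeasure := by
  have hfin : marg G i μ x ≠ ⊤ := measure_ne_top _ _
  refine FiniteMeasure.toMeasure_injective (Measure.ext fun B hB ↦ ?_)
  rw [FiniteMeasure.toMeasure_sectionAt_apply _ _ hB,
    ProbabilityMeasure.toMeasure_comp_toFiniteMeasure_eq_toMeasure,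
    hd.measure_singleton_prod hμ x hB, FiniteMeasure.toMeasure_smul, Measure.smul_apply,
    ENNReal.smul_def, smul_eq_mul, ENNReal.coe_toNNReal hfin, mul_comm]
  rfl

end Marginals

end CSGame

open CSGame

namespace CSGame

variable {n l : ℕ}
variable {X : Type} [Countable X] [MeasurableSpace X] [DiscreteMeasurableSpace X]
  [TopologicalSpace X] [DiscreteTopology X] [BorelSpace X] [SecondCountableTopology X]
variable {A : Fin n → Type} [∀ i, MeasurableSpace (A i)] [∀ i, TopologicalSpace (A i)]
  [∀ i, PolishSpace (A i)] [∀ i, BorelSpace (A i)]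
variable (G : GameData n l X A)

theorem stmt8 (hD : AssumptionD G) (i : Fin n)
    (μk : ℕ → ProbabilityMeasure (X × A i)) (μ0 : ProbabilityMeasure (X × A i))
    (hμk : ∀ k, μk k ∈ MiSet G i) (hμ0 : μ0 ∈ MiSet G i)
    (φk : ℕ → Stat G i) (φ0 : Stat G i)
    (hdk : ∀ k, Disint G i (μk k) (φk k)) (hd0 : Disint G i μ0 φ0)
    (hconv : Tendsto μk atTop (𝓝 μ0)) :
    ∀ x : X, Tendsto (fun k => marg G i (μk k) x) atTop (𝓝 (marg G i μ0 x)) ∧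
      Tendsto (fun k => (φk k).1 x) atTop (𝓝 (φ0.1 x)) := by
  intro x
  have : Nonempty (A i) := ⟨(G.hAs_ne i x).some⟩
  have hsection : ∀ {μ φ}, μ ∈ MiSet G i → Disint G i μ φ →
      μ.toFiniteMeasure.sectionAt x = (marg G i μ x).toNNReal • (φ.1 x).toFiniteMeasure :=
    fun hμ hd ↦ hd.sectionAt_eq (measure_notMem_As_of_mem_MiSet hμ) x
  have hmarg : ∀ {μ}, μ ∈ MiSet G i → (marg G i μ x).toNNReal ≠ 0 := fun hμ ↦
    (ENNReal.toNNReal_pos (marg_pos_of_mem_MiSet hD hμ x).ne' (measure_ne_top _ _)).ne'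
  have hlim := FiniteMeasure.tendsto_sectionAt
    ((ProbabilityMeasure.toFiniteMeasure_continuous.tendsto μ0).comp hconv) x
  simp only [Function.comp_def, hsection (hμk _) (hdk _), hsection hμ0 hd0] at hlim
  obtain ⟨hm, hφ⟩ :=
    FiniteMeasure.tendsto_of_tendsto_smul_toFiniteMeasure (fun k ↦ hmarg (hμk k)) (hmarg hμ0)
      hlim
  refine ⟨?_, hφ⟩
  have hfin : ∀ μ, marg G i μ x ≠ ⊤ := fun μ ↦ measure_ne_top _ _
  simpa only [ENNReal.coe_toNNReal (hfin _)] using ENNReal.tendsto_coe.2 hm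

end CSGame
end

section
/- Assume A and B. Then for every player i ∈ N and every ℓ ∈ L_0, sup_{φ∈Φ} |J_i^{ℓ,η(m)}(φ) − J_i^ℓ(φ)| → 0 as m → ∞. -/
open MeasureTheory ProbabilityTheory Filter Topology
open scoped ENNReal NNReal

open CSGame

lemma abs_max_neg_min_le {s : ℝ} (c : ℝ) (hs : 0 ≤ s) : |max (-s) (min c s)| ≤ s :=
  abs_le.2 ⟨le_max_left _ _, max_le (by linarith) (min_le_right _ _)⟩

lemma abs_max_neg_min_le_abs {s : ℝ} (c : ℝ) (hs : 0 ≤ s) : |max (-s) (min c s)| ≤ |c| := by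
  rcases abs_cases c with ⟨h, _⟩ | ⟨h, _⟩ <;> rw [h, abs_le] <;> grind

lemma abs_max_neg_min_sub_le {s : ℝ} (c : ℝ) (hs : 0 ≤ s) : |max (-s) (min c s) - c| ≤ |c| := by
  rcases abs_cases c with ⟨h, _⟩ | ⟨h, _⟩ <;> rw [h, abs_le] <;> grind

lemma max_neg_min_eq_self {s c : ℝ} (h : |c| ≤ s) : max (-s) (min c s) = c := by
  rw [abs_le] at h
  rw [min_eq_left h.2, max_eq_right h.1]

lemma abs_pow_mul_le_toReal {α u : ℝ} {b : ℝ≥0∞} (hα : 0 ≤ α) (t : ℕ) (h : |u| ≤ b.toReal) :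
    |α ^ t * u| ≤ (ENNReal.ofReal α ^ t * b).toReal := by
  rw [ENNReal.toReal_mul, ENNReal.toReal_pow, ENNReal.toReal_ofReal hα, abs_mul,
    abs_of_nonneg (pow_nonneg hα t)]
  gcongr

lemma summable_of_abs_le_toReal {u : ℕ → ℝ} {b : ℕ → ℝ≥0∞} (hb : ∑' t, b t ≠ ⊤)
    (hu : ∀ t, |u t| ≤ (b t).toReal) : Summable u :=
  (ENNReal.summable_toReal hb).of_norm_bounded hu

lemma abs_tsum_le_toReal_tsum {u : ℕ → ℝ} {b : ℕ → ℝ≥0∞} (hb : ∑' t, b t ≠ ⊤)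
    (hu : ∀ t, |u t| ≤ (b t).toReal) : |∑' t, u t| ≤ (∑' t, b t).toReal := by
  rw [ENNReal.tsum_toReal_eq (ENNReal.ne_top_of_tsum_ne_top hb)]
  exact tsum_of_norm_bounded (ENNReal.hasSum_toReal hb) (f := u) hu

/-- Tannery's theorem, uniformly in the index `i`. -/
lemma tendsto_iSup_tsum_of_le {ι : Type*} {f : ℕ → ι → ℕ → ℝ≥0∞} {g : ι → ℕ → ℝ≥0∞}
    (hfg : ∀ k i t, f k i t ≤ g i t)
    (htail : Tendsto (fun K => ⨆ i, ∑' t, g i (K + t)) atTop (𝓝 0))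
    (hterm : ∀ t, Tendsto (fun k => ⨆ i, f k i t) atTop (𝓝 0)) :
    Tendsto (fun k => ⨆ i, ∑' t, f k i t) atTop (𝓝 0) := by
  rw [ENNReal.tendsto_nhds_zero] at htail ⊢
  intro ε hε
  have hε2 : 0 < ε / 2 := ENNReal.half_pos hε.ne'
  obtain ⟨K, hK⟩ := (htail _ hε2).exists
  have hhead : Tendsto (fun k => ∑ t ∈ Finset.range K, ⨆ i, f k i t) atTop (𝓝 0) := by
    simpa using tendsto_finsetSum (Finset.range K) fun t _ => hterm t
  filter_upwards [ENNReal.tendsto_nhds_zero.1 hhead _ hε2] with k hk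
  refine iSup_le fun i => ?_
  calc ∑' t, f k i t = (∑ t ∈ Finset.range K, f k i t) + ∑' t, f k i (t + K) :=
        (ENNReal.summable.sum_add_tsum_nat_add' (k := K)).symm
    _ ≤ (∑ t ∈ Finset.range K, ⨆ i, f k i t) + ⨆ i, ∑' t, g i (K + t) := by
        gcongr with t
        · exact le_iSup (fun i => f k i t) i
        · exact le_iSup_of_le i (ENNReal.tsum_le_tsum fun t => add_comm t K ▸ hfg k i (t + K))
    _ ≤ ε / 2 + ε / 2 := add_le_add hk hK
    _ = ε := ENNReal.add_halves ε

section Integral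

variable {Ω : Type*} [MeasurableSpace Ω] {μ : Measure Ω}

lemma abs_integral_le_toReal_lintegral {u b : Ω → ℝ} (hu : ∀ z, |u z| ≤ b z)
    (hb : ∫⁻ z, ENNReal.ofReal (b z) ∂μ ≠ ⊤) :
    |∫ z, u z ∂μ| ≤ (∫⁻ z, ENNReal.ofReal (b z) ∂μ).toReal :=
  (norm_integral_le_lintegral_norm u).trans <|
    ENNReal.toReal_mono hb (lintegral_mono fun z => ENNReal.ofReal_le_ofReal (hu z))

lemma integrable_of_abs_le {u b : Ω → ℝ} (hm : Measurable u) (hu : ∀ z, |u z| ≤ b z)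
    (hb : ∫⁻ z, ENNReal.ofReal (b z) ∂μ ≠ ⊤) : Integrable u μ :=
  ⟨hm.aestronglyMeasurable, (hasFiniteIntegral_iff_norm u).2 <|
    (lintegral_mono fun z => ENNReal.ofReal_le_ofReal (hu z)).trans_lt hb.lt_top⟩

lemma lintegral_ofReal_le_setLIntegral_add [IsProbabilityMeasure μ] {F : Ω → ℝ}
    (hF : Measurable F) (c : ℝ) :
    ∫⁻ z, ENNReal.ofReal (F z) ∂μ
      ≤ ∫⁻ z in {z | c ≤ F z}, ENNReal.ofReal (F z) ∂μ + ENNReal.ofReal c := by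
  rw [← lintegral_add_compl _ (measurableSet_le measurable_const hF)]
  gcongr
  calc ∫⁻ z in {z | c ≤ F z}ᶜ, ENNReal.ofReal (F z) ∂μ
      ≤ ∫⁻ _ in {z | c ≤ F z}ᶜ, ENNReal.ofReal c ∂μ :=
        setLIntegral_mono measurable_const fun z hz =>
          ENNReal.ofReal_le_ofReal (not_le.1 (show ¬c ≤ F z from hz)).le
    _ ≤ ∫⁻ _, ENNReal.ofReal c ∂μ := setLIntegral_le_lintegral _ _
    _ = ENNReal.ofReal c := by simp

end Integral

namespace CSGame

section ActionLaw

variable {n l : ℕ} {X : Type} [MeasurableSpace X]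
  {A : Fin n → Type} [∀ i, MeasurableSpace (A i)] [∀ i, TopologicalSpace (A i)]
  (G : GameData n l X A)

noncomputable def actionLaw (φ : StatProfile G) (x : X) : Measure (JA A) :=
  Measure.pi fun i => ((φ i).1 x : Measure (A i))

instance (φ : StatProfile G) (x : X) : IsProbabilityMeasure (actionLaw G φ x) := by
  unfold actionLaw; infer_instance

noncomputable def stateMean (φ : StatProfile G) (f : X → JA A → ℝ) (x : X) : ℝ :=
  ∫ a, f x a ∂actionLaw G φ x

/-- `E_ν^π[w(x^t) 1{x^t ∈ S}]`. -/
noncomputable def wStateExpOn (ν : Measure X) (π : MultiStrategy G) (t : ℕ) (w : X → ℝ)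
    (S : Set X) : ℝ≥0∞ :=
  ∫⁻ h in lastState X (JA A) t ⁻¹' S, ENNReal.ofReal (w (lastState X (JA A) t h))
    ∂histMeas G ν π t

lemma tendsto_iSup_wStateExpOn {w : X → ℝ} (hB : AssumptionB G w) :
    Tendsto (fun k : ℕ => ⨆ π : MultiStrategy G, ENNReal.ofReal (1 - G.α) *
      ∑' t, ENNReal.ofReal G.α ^ t * wStateExpOn G G.η π t w {x | (k : ℝ) ≤ w x})
      atTop (𝓝 0) := by
  obtain ⟨-, -, htail, hUI⟩ := hB
  simp_rw [← ENNReal.tsum_mul_left]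
  refine tendsto_iSup_tsum_of_le
    (g := fun π t => ENNReal.ofReal (1 - G.α) * (ENNReal.ofReal G.α ^ t * wStateExp G G.η π t w))
    (fun k π t => by gcongr; exact setLIntegral_le_lintegral _ _) ?_ fun t => ?_
  · simpa only [← ENNReal.tsum_mul_left] using htail
  · simp_rw [← ENNReal.mul_iSup]
    simpa [wStateExpOn] using ENNReal.Tendsto.const_mul (ENNReal.Tendsto.const_mul (hUI t)
      (.inr (ENNReal.pow_ne_top ENNReal.ofReal_ne_top))) (.inr ENNReal.ofReal_ne_top)

lemma abs_ctrunc_sub_le {i : Fin n} {ℓ : Fin (l + 1)} {w : X → ℝ}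
    (hcw : ∀ x, ∀ a ∈ jointSet G x, |G.c i ℓ x a| ≤ w x) {m k : ℕ} (hk : (k : ℝ) ≤ √(m : ℝ))
    (x : X) (a : JA A) (ha : a ∈ jointSet G x) :
    |ctrunc G i ℓ m x a - G.c i ℓ x a| ≤ {x | (k : ℝ) ≤ w x}.indicator w x := by
  by_cases hx : (k : ℝ) ≤ w x
  · rw [Set.indicator_of_mem (s := {x | (k : ℝ) ≤ w x}) hx]
    exact (abs_max_neg_min_sub_le _ (Real.sqrt_nonneg _)).trans (hcw x a ha)
  · rw [Set.indicator_of_notMem (s := {x | (k : ℝ) ≤ w x}) hx, ctrunc,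
      max_neg_min_eq_self ((hcw x a ha).trans ((not_le.1 hx).le.trans hk)), sub_self, abs_zero]

variable [∀ i, T2Space (A i)] [∀ i, OpensMeasurableSpace (A i)]

lemma measurableSet_jointSet (x : X) : MeasurableSet (jointSet G x) :=
  MeasurableSet.univ_pi fun i => (G.hAs_cpt i x).isClosed.measurableSet

lemma ae_mem_jointSet (φ : StatProfile G) (x : X) :
    ∀ᵐ a ∂actionLaw G φ x, a ∈ jointSet G x := by
  refine (ae_iff_measure_eq (p := (· ∈ jointSet G x))
    (measurableSet_jointSet G x).nullMeasurableSet).2 ?_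
  rw [measure_univ, Set.ofPred_mem_eq, actionLaw, jointSet, Measure.pi_pi]
  refine Finset.prod_eq_one fun i _ => ?_
  rw [← ProbabilityMeasure.ennreal_coeFn_eq_coeFn_toMeasure, (φ i).2 x, ENNReal.coe_one]

variable {G}

lemma abs_stateMean_le {φ : StatProfile G} {f : X → JA A → ℝ} {x : X} {B : ℝ}
    (hf : ∀ a ∈ jointSet G x, |f x a| ≤ B) : |stateMean G φ f x| ≤ B := by
  simpa [stateMean] using norm_integral_le_of_norm_le_const
    ((ae_mem_jointSet G φ x).mono fun a ha => (Real.norm_eq_abs _).trans_le (hf a ha))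

lemma integrable_actionLaw {φ : StatProfile G} {f : X → JA A → ℝ} {x : X} {B : ℝ}
    (hm : Measurable (f x)) (hf : ∀ a ∈ jointSet G x, |f x a| ≤ B) :
    Integrable (f x) (actionLaw G φ x) :=
  .of_bound hm.aestronglyMeasurable B
    ((ae_mem_jointSet G φ x).mono fun a ha => (Real.norm_eq_abs _).trans_le (hf a ha))

lemma abs_stateMean_sub_le {φ : StatProfile G} {f g : X → JA A → ℝ} {x : X} {B D : ℝ}
    (hmf : Measurable (f x)) (hmg : Measurable (g x))
    (hf : ∀ a ∈ jointSet G x, |f x a| ≤ B) (hg : ∀ a ∈ jointSet G x, |g x a| ≤ B)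
    (hfg : ∀ a ∈ jointSet G x, |f x a - g x a| ≤ D) :
    |stateMean G φ f x - stateMean G φ g x| ≤ D := by
  rw [stateMean, stateMean, ← integral_sub (integrable_actionLaw hmf hf)
    (integrable_actionLaw hmg hg)]
  exact abs_stateMean_le (f := fun x a => f x a - g x a) hfg

end ActionLaw

section Play

variable {n l : ℕ} {X : Type} [MeasurableSpace X] [Countable X] [DiscreteMeasurableSpace X]
  {A : Fin n → Type} [∀ i, MeasurableSpace (A i)] [∀ i, TopologicalSpace (A i)]
  (G : GameData n l X A)

local notation "L" => lastState X (JA A)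

lemma measurable_transition (x : X) : Measurable (G.p x) := by
  refine Measure.measurable_of_measurable_coe _ fun s _ => ?_
  simp_rw [← Measure.tsum_indicator_apply_singleton _ s (MeasurableSet.of_discrete)]
  refine Measurable.tsum fun y => ?_
  by_cases hy : y ∈ s <;> simp [hy, G.hpm x y]

noncomputable def transKernel (x : X) : Kernel (JA A) X :=
  ⟨G.p x, measurable_transition G x⟩

instance (x : X) : IsMarkovKernel (transKernel G x) := ⟨G.hp x⟩

noncomputable def stateStepKernel (φ : StatProfile G) : Kernel X (JA A × X) :=
  Kernel.ofFunOfCountable fun x => actionLaw G φ x ⊗ₘ transKernel G x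

instance (φ : StatProfile G) : IsMarkovKernel (stateStepKernel G φ) :=
  ⟨fun x => show IsProbabilityMeasure (actionLaw G φ x ⊗ₘ transKernel G x) by infer_instance⟩

noncomputable def stepKernel (φ : StatProfile G) (t : ℕ) :
    Kernel (Hist X (JA A) t) (Hist X (JA A) (t + 1)) :=
  Kernel.id ×ₖ (stateStepKernel G φ).comap (L t) (measurable_lastState X (JA A) t)

-- `Hist X (JA A) (t + 1)` is a product only after unfolding `histMS`, so instance search and
-- rewriting have to see the kernel at its product type.
instance (φ : StatProfile G) (t : ℕ) : IsMarkovKernel (stepKernel G φ t) :=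
  inferInstanceAs (IsMarkovKernel
    (Kernel.id ×ₖ (stateStepKernel G φ).comap (L t) (measurable_lastState X (JA A) t)))

lemma stepKernel_apply (φ : StatProfile G) (t : ℕ) (h : Hist X (JA A) t) :
    stepKernel G φ t h
      = (actionLaw G φ (L t h)).bind fun a => (G.p (L t h) a).map fun y => (h, a, y) := by
  change (Kernel.id ×ₖ (stateStepKernel G φ).comap (L t) (measurable_lastState X (JA A) t)) h = _
  rw [Kernel.prod_apply, Kernel.id_apply, Kernel.comap_apply, Measure.dirac_prod,
    stateStepKernel, Kernel.ofFunOfCountable, Kernel.coe_mk, Measure.compProd_eq_comp_prod,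
    Measure.map_comp _ _ measurable_prodMk_left]
  refine congrArg _ (funext fun a => ?_)
  rw [Kernel.map_apply _ measurable_prodMk_left, Kernel.prod_apply, Kernel.id_apply,
    Measure.dirac_prod, Measure.map_map measurable_prodMk_left measurable_prodMk_left]
  rfl

lemma histMeas_succ (η' : Measure X) (φ : StatProfile G) (t : ℕ) :
    histMeas G η' (ofStatAll G φ) (t + 1)
      = stepKernel G φ t ∘ₘ histMeas G η' (ofStatAll G φ) t :=
  congrArg _ (funext fun h => (stepKernel_apply G φ t h).symm)

instance (η' : Measure X) [IsProbabilityMeasure η'] (φ : StatProfile G) (t : ℕ) :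
    IsProbabilityMeasure (histMeas G η' (ofStatAll G φ) t) := by
  induction t with
  | zero => assumption
  | succ t ih => rw [histMeas_succ]; infer_instance

lemma histMeas_add_smul (μ ν : Measure X) (a b : ℝ≥0∞) (φ : StatProfile G) (t : ℕ) :
    histMeas G (a • μ + b • ν) (ofStatAll G φ) t
      = a • histMeas G μ (ofStatAll G φ) t + b • histMeas G ν (ofStatAll G φ) t := by
  induction t with
  | zero => rfl
  | succ t ih => simp only [histMeas_succ, ih, Measure.comp_add, Measure.comp_smul]

lemma wStateExp_ne_top {w : X → ℝ} (hB : AssumptionB G w) (φ : StatProfile G) (t : ℕ) :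
    wStateExp G G.η (ofStatAll G φ) t w ≠ ⊤ := by
  obtain ⟨-, -, -, hUI⟩ := hB
  have := G.hη
  obtain ⟨k, hk⟩ := ((hUI t).eventually (gt_mem_nhds ENNReal.zero_lt_top)).exists
  refine ne_top_of_le_ne_top (ENNReal.add_ne_top.2 ⟨?_, ENNReal.ofReal_ne_top⟩)
    (lintegral_ofReal_le_setLIntegral_add ((Measurable.of_discrete (f := w)).comp
      (measurable_lastState X (JA A) t)) (k : ℝ))
  exact ((le_iSup_of_le (ofStatAll G φ) le_rfl).trans_lt hk).ne

lemma tsum_wStateExp_ne_top {w : X → ℝ} (hB : AssumptionB G w) (φ : StatProfile G) :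
    ∑' t, ENNReal.ofReal G.α ^ t * wStateExp G G.η (ofStatAll G φ) t w ≠ ⊤ := by
  obtain ⟨K, hK⟩ := (hB.2.2.1.eventually (gt_mem_nhds ENNReal.zero_lt_top)).exists
  have htail : ∑' t, ENNReal.ofReal G.α ^ (K + t) * wStateExp G G.η (ofStatAll G φ) (K + t) w
      ≠ ⊤ := by
    intro htop
    have := (le_iSup_of_le (ofStatAll G φ) le_rfl).trans_lt hK
    rw [htop, ENNReal.mul_top (ENNReal.ofReal_pos.2 (sub_pos.2 G.hα1)).ne'] at this
    exact lt_irrefl _ this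
  rw [← ENNReal.summable.sum_add_tsum_nat_add' (k := K)]
  refine ENNReal.add_ne_top.2 ⟨ENNReal.sum_ne_top.2 fun t _ => ?_, by
    simpa only [add_comm] using htail⟩
  exact ENNReal.mul_ne_top (ENNReal.pow_ne_top ENNReal.ofReal_ne_top) (wStateExp_ne_top G hB φ t)

end Play

section Stage

variable {n l : ℕ} {X : Type} [MeasurableSpace X] [DiscreteMeasurableSpace X]
  {A : Fin n → Type} [∀ i, MeasurableSpace (A i)] [∀ i, TopologicalSpace (A i)]
  (G : GameData n l X A)

local notation "L" => lastState X (JA A)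

lemma stageExp_ofStatAll (η' : Measure X) (φ : StatProfile G) (t : ℕ) (f : X → JA A → ℝ) :
    stageExp G η' (ofStatAll G φ) t f
      = ∫ h, stateMean G φ f (L t h) ∂histMeas G η' (ofStatAll G φ) t := rfl

lemma measurable_stateMean_lastState (φ : StatProfile G) (f : X → JA A → ℝ) (t : ℕ) :
    Measurable fun h => stateMean G φ f (L t h) :=
  (Measurable.of_discrete (f := stateMean G φ f)).comp (measurable_lastState X (JA A) t)

variable [∀ i, T2Space (A i)] [∀ i, OpensMeasurableSpace (A i)]
variable {G}

lemma abs_stageExp_sub_le {ν : Measure X} {φ : StatProfile G} {f g : X → JA A → ℝ} {w : X → ℝ}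
    {S : Set X} {t : ℕ} (hmf : ∀ x, Measurable (f x)) (hmg : ∀ x, Measurable (g x))
    (hf : ∀ x, ∀ a ∈ jointSet G x, |f x a| ≤ w x) (hg : ∀ x, ∀ a ∈ jointSet G x, |g x a| ≤ w x)
    (hfg : ∀ x, ∀ a ∈ jointSet G x, |f x a - g x a| ≤ S.indicator w x)
    (hW : wStateExp G ν (ofStatAll G φ) t w ≠ ⊤) :
    |stageExp G ν (ofStatAll G φ) t f - stageExp G ν (ofStatAll G φ) t g|
      ≤ (wStateExpOn G ν (ofStatAll G φ) t w S).toReal := by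
  have hI {f' : X → JA A → ℝ} (hf' : ∀ x, ∀ a ∈ jointSet G x, |f' x a| ≤ w x) :
      Integrable (fun h => stateMean G φ f' (L t h)) (histMeas G ν (ofStatAll G φ) t) :=
    integrable_of_abs_le (measurable_stateMean_lastState G φ f' t)
      (fun h => abs_stateMean_le (hf' _)) hW
  have hS : ∫⁻ h, ENNReal.ofReal (S.indicator w (L t h)) ∂histMeas G ν (ofStatAll G φ) t
      = wStateExpOn G ν (ofStatAll G φ) t w S := by
    rw [wStateExpOn, ← lintegral_indicator
      (measurable_lastState X (JA A) t (MeasurableSet.of_discrete (s := S)))]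
    refine lintegral_congr fun h => ?_
    by_cases hh : L t h ∈ S <;> simp [hh]
  rw [stageExp_ofStatAll, stageExp_ofStatAll, ← integral_sub (hI hf) (hI hg), ← hS]
  refine abs_integral_le_toReal_lintegral
    (fun h => abs_stateMean_sub_le (hmf _) (hmg _) (hf _) (hg _) (hfg _)) ?_
  exact hS ▸ ne_top_of_le_ne_top hW (setLIntegral_le_lintegral _ _)

lemma abs_Jfun_sub_le {φ : StatProfile G} {f g : X → JA A → ℝ} {w : X → ℝ} {S : Set X}
    (hmf : ∀ x, Measurable (f x)) (hmg : ∀ x, Measurable (g x))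
    (hf : ∀ x, ∀ a ∈ jointSet G x, |f x a| ≤ w x) (hg : ∀ x, ∀ a ∈ jointSet G x, |g x a| ≤ w x)
    (hfg : ∀ x, ∀ a ∈ jointSet G x, |f x a - g x a| ≤ S.indicator w x) {ν : Measure X}
    (hW : ∑' t, ENNReal.ofReal G.α ^ t * wStateExp G ν (ofStatAll G φ) t w ≠ ⊤) :
    |Jfun G ν f (ofStatAll G φ) - Jfun G ν g (ofStatAll G φ)|
      ≤ (ENNReal.ofReal (1 - G.α) *
          ∑' t, ENNReal.ofReal G.α ^ t * wStateExpOn G ν (ofStatAll G φ) t w S).toReal := by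
  have hα := G.hα0.le
  have h1α : 0 < 1 - G.α := sub_pos.2 G.hα1
  have hWt (t : ℕ) : wStateExp G ν (ofStatAll G φ) t w ≠ ⊤ := fun htop => by
    have := ENNReal.ne_top_of_tsum_ne_top hW t
    rw [htop, ENNReal.mul_top (pow_ne_zero _ (ENNReal.ofReal_pos.2 G.hα0).ne')] at this
    exact this rfl
  have hsum {f' : X → JA A → ℝ} (hf' : ∀ x, ∀ a ∈ jointSet G x, |f' x a| ≤ w x) :
      Summable fun t => G.α ^ t * stageExp G ν (ofStatAll G φ) t f' :=
    summable_of_abs_le_toReal hW fun t => abs_pow_mul_le_toReal hα t <| by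
      rw [stageExp_ofStatAll]
      exact abs_integral_le_toReal_lintegral (fun h => abs_stateMean_le (hf' _)) (hWt t)
  have hS : ∑' t, ENNReal.ofReal G.α ^ t * wStateExpOn G ν (ofStatAll G φ) t w S ≠ ⊤ :=
    ne_top_of_le_ne_top hW <| ENNReal.tsum_le_tsum fun t => by
      gcongr; exact setLIntegral_le_lintegral _ _
  rw [Jfun, Jfun, ← mul_sub, ← (hsum hf).tsum_sub (hsum hg), abs_mul, abs_of_pos h1α,
    ENNReal.toReal_mul, ENNReal.toReal_ofReal h1α.le]
  gcongr
  refine abs_tsum_le_toReal_tsum hS fun t => ?_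
  rw [← mul_sub]
  exact abs_pow_mul_le_toReal hα t (abs_stageExp_sub_le hmf hmg hf hg hfg (hWt t))

variable [Countable X]

lemma abs_stageExp_le {ν : Measure X} [IsProbabilityMeasure ν] {φ : StatProfile G}
    {f : X → JA A → ℝ} {B : ℝ} (hf : ∀ x, ∀ a ∈ jointSet G x, |f x a| ≤ B) (t : ℕ) :
    |stageExp G ν (ofStatAll G φ) t f| ≤ B := by
  rw [stageExp_ofStatAll]
  simpa using norm_integral_le_of_norm_le_const (μ := histMeas G ν (ofStatAll G φ) t)
    (ae_of_all _ fun h => (Real.norm_eq_abs _).trans_le (abs_stateMean_le (hf (L t h))))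

lemma summable_stageExp {ν : Measure X} [IsProbabilityMeasure ν] {φ : StatProfile G}
    {f : X → JA A → ℝ} {B : ℝ} (hf : ∀ x, ∀ a ∈ jointSet G x, |f x a| ≤ B) :
    Summable fun t => G.α ^ t * stageExp G ν (ofStatAll G φ) t f :=
  ((summable_geometric_of_lt_one G.hα0.le G.hα1).mul_right B).of_norm_bounded fun t => by
    rw [Real.norm_eq_abs, abs_mul, abs_of_nonneg (pow_nonneg G.hα0.le t)]
    exact mul_le_mul_of_nonneg_left (abs_stageExp_le hf t) (pow_nonneg G.hα0.le t)

lemma abs_Jfun_le {ν : Measure X} [IsProbabilityMeasure ν] {φ : StatProfile G}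
    {f : X → JA A → ℝ} {B : ℝ} (hf : ∀ x, ∀ a ∈ jointSet G x, |f x a| ≤ B) :
    |Jfun G ν f (ofStatAll G φ)| ≤ B := by
  have h1α : 0 < 1 - G.α := sub_pos.2 G.hα1
  have hsum : |∑' t, G.α ^ t * stageExp G ν (ofStatAll G φ) t f| ≤ B * (1 - G.α)⁻¹ :=
    tsum_of_norm_bounded ((hasSum_geometric_of_lt_one G.hα0.le G.hα1).mul_left B)
      (f := fun t => G.α ^ t * stageExp G ν (ofStatAll G φ) t f) fun t => by
      rw [Real.norm_eq_abs, abs_mul, abs_of_nonneg (pow_nonneg G.hα0.le t)]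
      exact (mul_le_mul_of_nonneg_left (abs_stageExp_le hf t) (pow_nonneg G.hα0.le t)).trans_eq
        (mul_comm _ _)
  rw [Jfun, abs_mul, abs_of_pos h1α]
  calc (1 - G.α) * |∑' t, G.α ^ t * stageExp G ν (ofStatAll G φ) t f|
      ≤ (1 - G.α) * (B * (1 - G.α)⁻¹) := by gcongr
    _ = B := by field_simp

lemma stageExp_add_smul {μ ν : Measure X} [IsProbabilityMeasure μ] [IsProbabilityMeasure ν]
    {a b : ℝ} (ha : 0 ≤ a) (hb : 0 ≤ b) {φ : StatProfile G} {f : X → JA A → ℝ} {B : ℝ}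
    (hf : ∀ x, ∀ a ∈ jointSet G x, |f x a| ≤ B) (t : ℕ) :
    stageExp G (ENNReal.ofReal a • μ + ENNReal.ofReal b • ν) (ofStatAll G φ) t f
      = a * stageExp G μ (ofStatAll G φ) t f + b * stageExp G ν (ofStatAll G φ) t f := by
  have hI (ρ : Measure X) [IsProbabilityMeasure ρ] :
      Integrable (fun h => stateMean G φ f (L t h)) (histMeas G ρ (ofStatAll G φ) t) :=
    .of_bound (measurable_stateMean_lastState G φ f t).aestronglyMeasurable B
      (ae_of_all _ fun h => (Real.norm_eq_abs _).trans_le (abs_stateMean_le (hf (L t h))))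
  rw [stageExp_ofStatAll, stageExp_ofStatAll, stageExp_ofStatAll, histMeas_add_smul,
    integral_add_measure ((hI μ).smul_measure ENNReal.ofReal_ne_top)
      ((hI ν).smul_measure ENNReal.ofReal_ne_top),
    integral_smul_measure, integral_smul_measure, ENNReal.toReal_ofReal ha,
    ENNReal.toReal_ofReal hb, smul_eq_mul, smul_eq_mul]

lemma Jfun_add_smul {μ ν : Measure X} [IsProbabilityMeasure μ] [IsProbabilityMeasure ν]
    {a b : ℝ} (ha : 0 ≤ a) (hb : 0 ≤ b) {φ : StatProfile G} {f : X → JA A → ℝ} {B : ℝ}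
    (hf : ∀ x, ∀ a ∈ jointSet G x, |f x a| ≤ B) :
    Jfun G (ENNReal.ofReal a • μ + ENNReal.ofReal b • ν) f (ofStatAll G φ)
      = a * Jfun G μ f (ofStatAll G φ) + b * Jfun G ν f (ofStatAll G φ) := by
  simp only [Jfun, stageExp_add_smul ha hb hf]
  have hsplit : ∀ t, G.α ^ t * (a * stageExp G μ (ofStatAll G φ) t f
      + b * stageExp G ν (ofStatAll G φ) t f)
      = a * (G.α ^ t * stageExp G μ (ofStatAll G φ) t f)
        + b * (G.α ^ t * stageExp G ν (ofStatAll G φ) t f) := fun t => by ring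
  rw [tsum_congr hsplit, ((summable_stageExp hf).mul_left a).tsum_add
    ((summable_stageExp hf).mul_left b), tsum_mul_left, tsum_mul_left]
  ring

lemma abs_Jm_sub_J_le {w : X → ℝ} (hB : AssumptionB G w) {ηt : Measure X}
    [IsProbabilityMeasure ηt] (i : Fin n) (ℓ : Fin (l + 1)) {m : ℕ} (hm : 0 < m)
    (φ : StatProfile G) :
    |Jm G ηt m i ℓ (ofStatAll G φ) - J G i ℓ (ofStatAll G φ)|
      ≤ (ENNReal.ofReal (1 - G.α) * ∑' t, ENNReal.ofReal G.α ^ t *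
          wStateExpOn G G.η (ofStatAll G φ) t w {x | (⌊√(m : ℝ)⌋₊ : ℝ) ≤ w x}).toReal
        + 2 / √(m : ℝ) := by
  have := G.hη
  have hcw := hB.2.1 i ℓ
  have hm1 : (1 : ℝ) ≤ m := by exact_mod_cast hm
  have hs : 0 < √(m : ℝ) := Real.sqrt_pos.2 (by positivity)
  have hct : ∀ x, ∀ a ∈ jointSet G x, |ctrunc G i ℓ m x a| ≤ √(m : ℝ) :=
    fun x a _ => abs_max_neg_min_le _ hs.le
  set T := fun ν => Jfun G ν (ctrunc G i ℓ m) (ofStatAll G φ)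
  have hsplit : Jm G ηt m i ℓ (ofStatAll G φ) = (1 - 1 / m) * T G.η + 1 / m * T ηt :=
    Jfun_add_smul (sub_nonneg.2 ((div_le_one (by positivity)).2 hm1)) (by positivity) hct
  have htrunc := abs_Jfun_sub_le (ν := G.η)
    (fun x => measurable_const.max ((G.hc i ℓ x).min measurable_const)) (G.hc i ℓ)
    (fun x a ha => (abs_max_neg_min_le_abs _ hs.le).trans (hcw x a ha)) hcw
    (abs_ctrunc_sub_le G hcw (Nat.floor_le hs.le)) (tsum_wStateExp_ne_top G hB φ)
  have hT : |T ηt - T G.η| ≤ √(m : ℝ) + √(m : ℝ) :=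
    (abs_sub _ _).trans (add_le_add (abs_Jfun_le hct) (abs_Jfun_le hct))
  calc |Jm G ηt m i ℓ (ofStatAll G φ) - J G i ℓ (ofStatAll G φ)|
      = |(T G.η - J G i ℓ (ofStatAll G φ)) + (T ηt - T G.η) / m| := by
        rw [hsplit]; ring_nf
    _ ≤ _ + (√(m : ℝ) + √(m : ℝ)) / m := by
        refine (abs_add_le _ _).trans (add_le_add htrunc ?_)
        rw [abs_div, Nat.abs_cast]
        gcongr
    _ = _ := by
        congr 1
        rw [div_eq_div_iff (by positivity) hs.ne']
        linear_combination 2 * Real.mul_self_sqrt (Nat.cast_nonneg (α := ℝ) m)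

end Stage

end CSGame

namespace CSGame

variable {n l : ℕ}
variable {X : Type} [Countable X] [MeasurableSpace X] [DiscreteMeasurableSpace X]
  [TopologicalSpace X] [DiscreteTopology X] [BorelSpace X] [SecondCountableTopology X]
variable {A : Fin n → Type} [∀ i, MeasurableSpace (A i)] [∀ i, TopologicalSpace (A i)]
  [∀ i, PolishSpace (A i)] [∀ i, BorelSpace (A i)]
variable (G : GameData n l X A)

theorem stmt14 (w : X → ℝ) (hB : AssumptionB G w)
    (ηt : Measure X) (hηt : IsPerturb G ηt) (i : Fin n) (ℓ : Fin (l + 1)) :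
    ∀ ε : ℝ, 0 < ε → ∃ M : ℕ, ∀ m : ℕ, M ≤ m → ∀ φ : StatProfile G,
      |Jm G ηt m i ℓ (ofStatAll G φ) - J G i ℓ (ofStatAll G φ)| ≤ ε := by
  have := hηt.1
  intro ε hε
  have hsqrt : Tendsto (fun m : ℕ => √(m : ℝ)) atTop atTop :=
    Real.tendsto_sqrt_atTop.comp tendsto_natCast_atTop_atTop
  have herr := (tendsto_iSup_wStateExpOn G hB).comp (tendsto_nat_floor_atTop.comp hsqrt)
  have hdiv : Tendsto (fun m : ℕ => 2 / √(m : ℝ)) atTop (𝓝 0) :=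
    tendsto_const_nhds.div_atTop hsqrt
  obtain ⟨M, hM⟩ := eventually_atTop.1 <|
    (herr.eventually (gt_mem_nhds (ENNReal.ofReal_pos.2 (half_pos hε)))).and <|
      (hdiv.eventually (ge_mem_nhds (half_pos hε))).and (eventually_gt_atTop 0)
  refine ⟨M, fun m hm φ => ?_⟩
  obtain ⟨herr_m, hdiv_m, hm0⟩ := hM m hm
  calc _ ≤ _ := abs_Jm_sub_J_le hB i ℓ hm0 φ
    _ ≤ ε / 2 + ε / 2 := add_le_add (ENNReal.toReal_le_of_le_ofReal (half_pos hε).le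
        ((le_iSup_of_le (ofStatAll G φ) le_rfl).trans herr_m.le)) hdiv_m
    _ = ε := add_halves ε

end CSGame
end
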